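/- Let q > 5 and ν̃ ∈ (−1/2, 1). There exists a constant C_ℳ > 0, depending only on q and ν̃, with the following property. Let ρ > 0, T > 0, U ∈ ℝ³, and let 𝒯 be a real symmetric 3×3 matrix with min{1−ν̃,1+2ν̃}·T·|k|² ≤ kᵀ𝒯k ≤ max{1−ν̃,1+2ν̃}·T·|k|² for all k ∈ ℝ³. Define the ellipsoidal Gaussian M(v) = ρ/√(det(2π𝒯)) · exp(−½(v−U)ᵀ𝒯⁻¹(v−U)) for v ∈ ℝ³. If B > 0 satisfies the three moment bounds ρ ≤ B·T^{3/2}, ρ·(T+|U|²)^{(q−3)/2} ≤ B, and ρ·|U|^{q+3} ≤ B·((T+|U|²)·T)^{3/2}, then sup_{v∈ℝ³} (1+|v|)^q · M(v) ≤ C_ℳ · B. -/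

import Mathlib

noncomputable section

open Real MeasureTheory

/-- Velocity space `ℝ³`. -/
abbrev V3 := Fin 3 → ℝ

/-- Velocity grid index set `ℤ³`. -/
abbrev Idx3 := Fin 3 → ℤ

/-- Euclidean norm on `V3`. -/
def enorm3 (v : V3) : ℝ := Real.sqrt (∑ a, v a ^ 2)

/-- The velocity grid node `v_j = jΔv`. -/
def gridV (Δv : ℝ) (j : Idx3) : V3 := fun a => (j a : ℝ) * Δv

/-- Quadratic form `kᵀ A k` of a 3×3 matrix. -/
def quadForm (A : Matrix (Fin 3) (Fin 3) ℝ) (k : V3) : ℝ := ∑ a, ∑ b, k a * A a b * k b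

/-- The ellipsoidal Gaussian with density `ρ`, bulk velocity `U` and temperature tensor `T`. -/
def gaussianM (ρ : ℝ) (U : V3) (T : Matrix (Fin 3) (Fin 3) ℝ) (v : V3) : ℝ :=
  ρ / Real.sqrt ((2 * π) ^ 3 * T.det) *
    Real.exp (-(1 / 2) * quadForm T⁻¹ (fun a => v a - U a))

/-- Discrete density. -/
def dRho (Δv : ℝ) (h : Idx3 → ℝ) : ℝ := ∑' j : Idx3, h j * Δv ^ 3

/-- Discrete bulk velocity. -/
def dU (Δv : ℝ) (h : Idx3 → ℝ) : V3 :=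
  fun a => (dRho Δv h)⁻¹ * ∑' j : Idx3, h j * gridV Δv j a * Δv ^ 3

/-- Discrete temperature. -/
def dT (Δv : ℝ) (h : Idx3 → ℝ) : ℝ :=
  (3 * dRho Δv h)⁻¹ * ∑' j : Idx3, h j * enorm3 (fun a => gridV Δv j a - dU Δv h a) ^ 2 * Δv ^ 3

/-- Discrete stress tensor. -/
def dTheta (Δv : ℝ) (h : Idx3 → ℝ) : Matrix (Fin 3) (Fin 3) ℝ :=
  Matrix.of fun a b =>
    (dRho Δv h)⁻¹ *
      ∑' j : Idx3, h j * (gridV Δv j a - dU Δv h a) * (gridV Δv j b - dU Δv h b) * Δv ^ 3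

/-- The temperature tensor `(1−ν)T·Id + νΘ`. -/
def tensorOf (ν T : ℝ) (Θ : Matrix (Fin 3) (Fin 3) ℝ) : Matrix (Fin 3) (Fin 3) ℝ :=
  ((1 - ν) * T) • (1 : Matrix (Fin 3) (Fin 3) ℝ) + ν • Θ

/-- Continuous density. -/
def cRho (F : V3 → ℝ) : ℝ := ∫ v : V3, F v

/-- Continuous bulk velocity. -/
def cU (F : V3 → ℝ) : V3 := fun a => (cRho F)⁻¹ * ∫ v : V3, F v * v a

/-- Continuous temperature. -/
def cT (F : V3 → ℝ) : ℝ :=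
  (3 * cRho F)⁻¹ * ∫ v : V3, F v * enorm3 (fun a => v a - cU F a) ^ 2

/-- Continuous stress tensor. -/
def cTheta (F : V3 → ℝ) : Matrix (Fin 3) (Fin 3) ℝ :=
  Matrix.of fun a b => (cRho F)⁻¹ * ∫ v : V3, F v * (v a - cU F a) * (v b - cU F b)

/-- Collision frequency `A_ν = (1−ν)⁻¹`. -/
def Anu (ν : ℝ) : ℝ := (1 - ν)⁻¹

/-- The modified relaxation parameter `nt = κν/(κ+Δt)`. -/
def nuTilde (κ ν Δt : ℝ) : ℝ := κ * ν / (κ + Δt)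

/-- `s(i,j)`: the unique integer with `sΔx ≤ iΔx − Δt v_{j,1} < (s+1)Δx`. -/
def sIdx (Δx Δt Δv : ℝ) (i : ℤ) (j : Idx3) : ℤ :=
  ⌊((i : ℝ) * Δx - Δt * ((j 0 : ℝ) * Δv)) / Δx⌋

/-- Linear reconstruction of a grid function at the foot of the characteristic. -/
def recon (Δx Δt Δv : ℝ) (g : ℤ → Idx3 → ℝ) (i : ℤ) (j : Idx3) : ℝ :=
  (((i : ℝ) * Δx - Δt * ((j 0 : ℝ) * Δv) - (sIdx Δx Δt Δv i j : ℝ) * Δx) / Δx) *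
      g (sIdx Δx Δt Δv i j + 1) j
    + ((((sIdx Δx Δt Δv i j : ℝ) + 1) * Δx - ((i : ℝ) * Δx - Δt * ((j 0 : ℝ) * Δv))) / Δx) *
      g (sIdx Δx Δt Δv i j) j

/-- Discrete ellipsoidal Gaussian built from a velocity grid function `h`. -/
def gaussD (nt Δv : ℝ) (h : Idx3 → ℝ) (j : Idx3) : ℝ :=
  gaussianM (dRho Δv h) (dU Δv h) (tensorOf nt (dT Δv h) (dTheta Δv h)) (gridV Δv j)

/-- The shifted initial datum `v ↦ f₀(x_i − Δt v₁, v)`. -/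
def shift0 (f₀ : ℝ → V3 → ℝ) (Δx Δt : ℝ) (i : ℤ) : V3 → ℝ :=
  fun v => f₀ ((i : ℝ) * Δx - Δt * v 0) v

/-- Step-0 ellipsoidal Gaussian, built from the continuous macroscopic fields of `f̃⁰`. -/
def gauss0 (f₀ : ℝ → V3 → ℝ) (κ ν Δx Δt Δv : ℝ) (i : ℤ) (j : Idx3) : ℝ :=
  gaussianM (cRho (shift0 f₀ Δx Δt i)) (cU (shift0 f₀ Δx Δt i))
    (tensorOf (nuTilde κ ν Δt) (cT (shift0 f₀ Δx Δt i)) (cTheta (shift0 f₀ Δx Δt i)))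
    (gridV Δv j)

/-- `f̃⁰_{i,j} = f₀(x_i − Δt v_{j,1}, v_j)`. -/
def tilde0 (f₀ : ℝ → V3 → ℝ) (Δx Δt Δv : ℝ) (i : ℤ) (j : Idx3) : ℝ :=
  f₀ ((i : ℝ) * Δx - Δt * ((j 0 : ℝ) * Δv)) (gridV Δv j)

/-- The semi-Lagrangian scheme iterates `fⁿ_{i,j}`. -/
def schemeF (f₀ : ℝ → V3 → ℝ) (κ ν Δx Δt Δv : ℝ) : ℕ → ℤ → Idx3 → ℝ
  | 0 => fun i j => f₀ ((i : ℝ) * Δx) (gridV Δv j)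
  | 1 => fun i j =>
      (κ / (κ + Anu ν * Δt)) * tilde0 f₀ Δx Δt Δv i j
        + (Anu ν * Δt / (κ + Anu ν * Δt)) * gauss0 f₀ κ ν Δx Δt Δv i j
  | (n + 2) => fun i j =>
      (κ / (κ + Anu ν * Δt)) * recon Δx Δt Δv (schemeF f₀ κ ν Δx Δt Δv (n + 1)) i j
        + (Anu ν * Δt / (κ + Anu ν * Δt)) *
            gaussD (nuTilde κ ν Δt) Δv (recon Δx Δt Δv (schemeF f₀ κ ν Δx Δt Δv (n + 1)) i) j

/-- The reconstructed scheme iterates `f̃ⁿ_{i,j}`. -/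
def schemeTilde (f₀ : ℝ → V3 → ℝ) (κ ν Δx Δt Δv : ℝ) : ℕ → ℤ → Idx3 → ℝ
  | 0 => tilde0 f₀ Δx Δt Δv
  | (n + 1) => recon Δx Δt Δv (schemeF f₀ κ ν Δx Δt Δv (n + 1))

/-- The ellipsoidal Gaussian used in the `n → n+1` update of the scheme. -/
def schemeGauss (f₀ : ℝ → V3 → ℝ) (κ ν Δx Δt Δv : ℝ) : ℕ → ℤ → Idx3 → ℝ
  | 0 => gauss0 f₀ κ ν Δx Δt Δv
  | (n + 1) => fun i j =>
      gaussD (nuTilde κ ν Δt) Δv (schemeTilde f₀ κ ν Δx Δt Δv (n + 1) i) j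

/-- Discrete density of `f̃ⁿ` at spatial node `i` (continuous fields at step 0). -/
def schemeRho (f₀ : ℝ → V3 → ℝ) (κ ν Δx Δt Δv : ℝ) : ℕ → ℤ → ℝ
  | 0 => fun i => cRho (shift0 f₀ Δx Δt i)
  | (n + 1) => fun i => dRho Δv (schemeTilde f₀ κ ν Δx Δt Δv (n + 1) i)

/-- Discrete bulk velocity of `f̃ⁿ` at spatial node `i` (continuous fields at step 0). -/
def schemeU (f₀ : ℝ → V3 → ℝ) (κ ν Δx Δt Δv : ℝ) : ℕ → ℤ → V3
  | 0 => fun i => cU (shift0 f₀ Δx Δt i)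
  | (n + 1) => fun i => dU Δv (schemeTilde f₀ κ ν Δx Δt Δv (n + 1) i)

/-- Discrete temperature of `f̃ⁿ` at spatial node `i` (continuous fields at step 0). -/
def schemeTemp (f₀ : ℝ → V3 → ℝ) (κ ν Δx Δt Δv : ℝ) : ℕ → ℤ → ℝ
  | 0 => fun i => cT (shift0 f₀ Δx Δt i)
  | (n + 1) => fun i => dT Δv (schemeTilde f₀ κ ν Δx Δt Δv (n + 1) i)

/-- Weighted `L∞_q` norm of the initial datum. -/
def normLq (q : ℝ) (f₀ : ℝ → V3 → ℝ) : ℝ :=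
  ⨆ x : ℝ, ⨆ v : V3, |f₀ x v| * (1 + enorm3 v) ^ q

/-!
The two-sided bound on `𝒯` gives `det 𝒯 ≥ (λ₋ T)³` (through its eigenvalues) and, by
completing the square, `(v - U)ᵀ 𝒯⁻¹ (v - U) ≥ |v - U|² / (λ₊ T)`, where `λ₋`, `λ₊` are the
minimum and maximum of `1 - ν̃`, `1 + 2ν̃`; hence
`M(v) ≤ ρ (2π λ₋ T)^(-3/2) exp(-|v - U|² / (2 λ₊ T))`.
Since `1 + |v| ≤ 1 + |U| + |v - U|`, the weight `(1 + |v|)^q` splits into `1`, `|U|^q` and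
`|v - U|^q`. The first is paid for by `ρ ≤ B T^(3/2)`; `|U|^q` by the second moment bound when
`|U|² ≤ T` and by the third when `|U|² > T`; and `|v - U|^q` against the Gaussian costs
`(λ₊ T)^(q/2)`, which `ρ T^((q-3)/2) ≤ B` absorbs.
-/

open Matrix

namespace Matrix

variable {n : Type*} [Fintype n] [DecidableEq n]

theorem pow_card_le_det_of_dotProduct_mulVec_ge {A : Matrix n n ℝ} (hA : A.IsSymm) {α : ℝ}
    (hα : 0 ≤ α) (h : ∀ k : n → ℝ, α * (k ⬝ᵥ k) ≤ k ⬝ᵥ (A *ᵥ k)) :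
    α ^ Fintype.card n ≤ A.det := by
  have hH : A.IsHermitian := by
    rwa [IsHermitian, conjTranspose_eq_transpose_of_trivial]
  have hev : ∀ i, α ≤ hH.eigenvalues i := by
    intro i
    have hunit : (hH.eigenvectorBasis i : n → ℝ) ⬝ᵥ hH.eigenvectorBasis i = 1 := by
      have := real_inner_self_eq_norm_sq (hH.eigenvectorBasis i)
      rw [hH.eigenvectorBasis.norm_eq_one i, one_pow] at this
      rwa [EuclideanSpace.inner_eq_star_dotProduct, star_trivial] at this
    simpa [hH.eigenvalues_eq i, hunit] using h (hH.eigenvectorBasis i)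
  rw [hH.det_eq_prod_eigenvalues, ← Finset.card_univ, ← Finset.prod_const]
  exact Finset.prod_le_prod (fun _ _ => hα) fun i _ => by simpa using hev i

theorem dotProduct_div_le_dotProduct_inv_mulVec {A : Matrix n n ℝ} (hA : A.IsSymm)
    (hdet : IsUnit A.det) (hpos : ∀ k : n → ℝ, 0 ≤ k ⬝ᵥ (A *ᵥ k)) {β : ℝ} (hβ : 0 < β)
    (h : ∀ k : n → ℝ, k ⬝ᵥ (A *ᵥ k) ≤ β * (k ⬝ᵥ k)) (k : n → ℝ) :
    (k ⬝ᵥ k) / β ≤ k ⬝ᵥ (A⁻¹ *ᵥ k) := by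
  set x := β⁻¹ • k
  set y := A⁻¹ *ᵥ k
  have hAy : A *ᵥ y = k := by simp [y, mulVec_mulVec, mul_nonsing_inv _ hdet]
  have hsymm : ∀ a b : n → ℝ, a ⬝ᵥ (A *ᵥ b) = b ⬝ᵥ (A *ᵥ a) := by
    intro a b
    rw [dotProduct_mulVec, ← mulVec_transpose, hA.eq, dotProduct_comm]
  -- `0 ≤ (x - A⁻¹k)ᵀ A (x - A⁻¹k)` with `x = k / β`
  have hsq : 0 ≤ x ⬝ᵥ (A *ᵥ x) - 2 * (x ⬝ᵥ k) + k ⬝ᵥ y := by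
    have := hpos (x - y)
    rw [mulVec_sub, dotProduct_sub, sub_dotProduct, sub_dotProduct, hsymm y x, hAy,
      dotProduct_comm y k] at this
    linarith
  have hxk : x ⬝ᵥ k = (k ⬝ᵥ k) / β := by simp [x, div_eq_inv_mul]
  have hxx : x ⬝ᵥ (A *ᵥ x) ≤ (k ⬝ᵥ k) / β := by
    simp only [x, mulVec_smul, smul_dotProduct, dotProduct_smul, smul_eq_mul]
    rw [div_eq_inv_mul]
    exact mul_le_mul_of_nonneg_left ((inv_mul_le_iff₀ hβ).2 (h k)) (inv_nonneg.2 hβ.le)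
  linarith

end Matrix

theorem rpow_mul_exp_neg_sq_div_le {q β t : ℝ} (hq : 0 ≤ q) (hβ : 0 < β) (ht : 0 ≤ t) :
    t ^ q * exp (-t ^ 2 / (2 * β)) ≤ exp (q ^ 2 / 2) * β ^ (q / 2) := by
  have hsqrt : 0 < √β := Real.sqrt_pos.2 hβ
  set s := t / √β
  have hs : 0 ≤ s := div_nonneg ht hsqrt.le
  have ht_eq : t = √β * s := (mul_div_cancel₀ t hsqrt.ne').symm
  have hsq : t ^ 2 / (2 * β) = s ^ 2 / 2 := by
    rw [ht_eq, mul_pow, Real.sq_sqrt hβ.le]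
    field_simp
  have hpow : t ^ q = β ^ (q / 2) * s ^ q := by
    rw [ht_eq, Real.mul_rpow hsqrt.le hs, Real.sqrt_eq_rpow, ← Real.rpow_mul hβ.le]
    ring_nf
  have hs_le : s ^ q ≤ exp (s * q) := by
    rw [Real.exp_mul]
    exact Real.rpow_le_rpow hs (by linarith [Real.add_one_le_exp s]) hq
  calc t ^ q * exp (-t ^ 2 / (2 * β)) = β ^ (q / 2) * (s ^ q * exp (-(s ^ 2 / 2))) := by
        rw [hpow, neg_div, hsq]; ring
    _ ≤ β ^ (q / 2) * (exp (s * q) * exp (-(s ^ 2 / 2))) := by gcongr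
    _ = β ^ (q / 2) * exp (s * q - s ^ 2 / 2) := by rw [← Real.exp_add, sub_eq_add_neg]
    _ ≤ β ^ (q / 2) * exp (q ^ 2 / 2) := by gcongr; nlinarith [sq_nonneg (s - q)]
    _ = exp (q ^ 2 / 2) * β ^ (q / 2) := mul_comm _ _

theorem rpow_add_add_le_mul_rpow_add_rpow_add_rpow {a b c q : ℝ} (ha : 0 ≤ a) (hb : 0 ≤ b)
    (hc : 0 ≤ c) (hq : 1 ≤ q) :
    (a + b + c) ^ q ≤ 3 ^ (q - 1) * (a ^ q + b ^ q + c ^ q) := by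
  have := Real.rpow_sum_le_const_mul_sum_rpow_of_nonneg (s := Finset.univ) (f := ![a, b, c]) hq
    (by simp [Fin.forall_fin_succ, ha, hb, hc])
  simpa [Fin.sum_univ_three, add_assoc] using this

section Moments

variable {ρ T u B q : ℝ}

theorem mul_rpow_le_of_moment (hρ : 0 ≤ ρ) (hT : 0 < T) (hq : 3 ≤ q)
    (h : ρ * (T + u ^ 2) ^ ((q - 3) / 2) ≤ B) : ρ * T ^ ((q - 3) / 2) ≤ B :=
  le_trans (mul_le_mul_of_nonneg_left
    (Real.rpow_le_rpow hT.le (by nlinarith) (by linarith)) hρ) h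

theorem mul_rpow_le_two_rpow_mul_of_moments (hρ : 0 ≤ ρ) (hT : 0 < T) (hu : 0 ≤ u) (hB : 0 ≤ B)
    (hq : 3 ≤ q)
    (h₂ : ρ * (T + u ^ 2) ^ ((q - 3) / 2) ≤ B)
    (h₃ : ρ * u ^ (q + 3) ≤ B * ((T + u ^ 2) * T) ^ ((3 : ℝ) / 2)) :
    ρ * u ^ q ≤ 2 ^ ((3 : ℝ) / 2) * B * T ^ ((3 : ℝ) / 2) := by
  have hT32 : 0 ≤ T ^ ((3 : ℝ) / 2) := Real.rpow_nonneg hT.le _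
  rcases le_or_gt (u ^ 2) T with hsmall | hlarge
  · have huq : u ^ q ≤ T ^ ((q - 3) / 2) * T ^ ((3 : ℝ) / 2) := by
      calc u ^ q ≤ √T ^ q :=
            Real.rpow_le_rpow hu ((Real.le_sqrt hu hT.le).2 hsmall) (by linarith)
        _ = T ^ ((q - 3) / 2) * T ^ ((3 : ℝ) / 2) := by
            rw [← Real.rpow_add hT, Real.sqrt_eq_rpow, ← Real.rpow_mul hT.le]
            ring_nf
    calc ρ * u ^ q ≤ ρ * T ^ ((q - 3) / 2) * T ^ ((3 : ℝ) / 2) := by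
          rw [mul_assoc]; exact mul_le_mul_of_nonneg_left huq hρ
      _ ≤ B * T ^ ((3 : ℝ) / 2) :=
          mul_le_mul_of_nonneg_right (mul_rpow_le_of_moment hρ hT hq h₂) hT32
      _ ≤ 2 ^ ((3 : ℝ) / 2) * B * T ^ ((3 : ℝ) / 2) := by
          rw [mul_assoc]
          exact le_mul_of_one_le_left (mul_nonneg hB hT32)
            (Real.one_le_rpow (by norm_num) (by norm_num))
  · have hu0 : 0 < u := by nlinarith
    have hu3 : 0 < u ^ (3 : ℝ) := Real.rpow_pos_of_pos hu0 _
    have hST : ((T + u ^ 2) * T) ^ ((3 : ℝ) / 2) ≤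
        2 ^ ((3 : ℝ) / 2) * u ^ (3 : ℝ) * T ^ ((3 : ℝ) / 2) := by
      calc ((T + u ^ 2) * T) ^ ((3 : ℝ) / 2) ≤ (2 * u ^ 2 * T) ^ ((3 : ℝ) / 2) :=
            Real.rpow_le_rpow (by positivity) (by nlinarith) (by norm_num)
        _ = 2 ^ ((3 : ℝ) / 2) * u ^ (3 : ℝ) * T ^ ((3 : ℝ) / 2) := by
            rw [Real.mul_rpow (by positivity) hT.le, Real.mul_rpow (by norm_num) (by positivity),
              ← Real.rpow_natCast, ← Real.rpow_mul hu]
            norm_num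
    refine le_of_mul_le_mul_right ?_ hu3
    calc ρ * u ^ q * u ^ (3 : ℝ) = ρ * u ^ (q + 3) := by rw [Real.rpow_add hu0, mul_assoc]
      _ ≤ B * ((T + u ^ 2) * T) ^ ((3 : ℝ) / 2) := h₃
      _ ≤ B * (2 ^ ((3 : ℝ) / 2) * u ^ (3 : ℝ) * T ^ ((3 : ℝ) / 2)) :=
          mul_le_mul_of_nonneg_left hST hB
      _ = 2 ^ ((3 : ℝ) / 2) * B * T ^ ((3 : ℝ) / 2) * u ^ (3 : ℝ) := by ring

end Moments

theorem quadForm_eq_dotProduct (A : Matrix (Fin 3) (Fin 3) ℝ) (k : V3) :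
    quadForm A k = k ⬝ᵥ (A *ᵥ k) := by
  simp [quadForm, dotProduct, mulVec, Finset.mul_sum, mul_assoc]

theorem enorm3_nonneg (k : V3) : 0 ≤ enorm3 k := Real.sqrt_nonneg _

theorem enorm3_sq (k : V3) : enorm3 k ^ 2 = k ⬝ᵥ k := by
  rw [enorm3, Real.sq_sqrt (Finset.sum_nonneg fun a _ => sq_nonneg (k a))]
  simp [dotProduct, sq]

theorem enorm3_eq_norm (k : V3) : enorm3 k = ‖WithLp.toLp 2 k‖ := by
  simp [enorm3, EuclideanSpace.norm_eq]

theorem enorm3_le_add_enorm3_sub (v U : V3) :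
    enorm3 v ≤ enorm3 U + enorm3 (fun a => v a - U a) := by
  simp only [enorm3_eq_norm]
  exact norm_le_norm_add_norm_sub' _ _

theorem gaussianM_le {ρ α β : ℝ} {𝒯 : Matrix (Fin 3) (Fin 3) ℝ} (hρ : 0 ≤ ρ)
    (h𝒯 : 𝒯.IsSymm) (hα : 0 < α) (hβ : 0 < β)
    (hb : ∀ k : V3, α * enorm3 k ^ 2 ≤ quadForm 𝒯 k ∧ quadForm 𝒯 k ≤ β * enorm3 k ^ 2)
    (U v : V3) :
    gaussianM ρ U 𝒯 v ≤
      ρ / (2 * π * α) ^ ((3 : ℝ) / 2) * exp (-enorm3 (fun a => v a - U a) ^ 2 / (2 * β)) := by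
  simp only [quadForm_eq_dotProduct, enorm3_sq] at hb
  have hdet : α ^ 3 ≤ 𝒯.det := by
    simpa using pow_card_le_det_of_dotProduct_mulVec_ge h𝒯 hα.le fun k => (hb k).1
  have hinv := dotProduct_div_le_dotProduct_inv_mulVec h𝒯
    (isUnit_iff_ne_zero.2 (lt_of_lt_of_le (pow_pos hα 3) hdet).ne')
    (fun k => le_trans (mul_nonneg hα.le (by simpa using dotProduct_self_star_nonneg k)) (hb k).1)
    hβ (fun k => (hb k).2) (fun a => v a - U a)
  have hnorm : (2 * π * α) ^ ((3 : ℝ) / 2) ≤ √((2 * π) ^ 3 * 𝒯.det) := by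
    calc (2 * π * α) ^ ((3 : ℝ) / 2) = √((2 * π * α) ^ 3) := by
          rw [Real.sqrt_eq_rpow, ← Real.rpow_natCast, ← Real.rpow_mul (by positivity)]
          norm_num
      _ ≤ √((2 * π) ^ 3 * 𝒯.det) := Real.sqrt_le_sqrt (by rw [mul_pow]; gcongr)
  unfold gaussianM
  rw [quadForm_eq_dotProduct, enorm3_sq]
  gcongr ρ / ?_ * exp ?_
  rw [show ∀ x : ℝ, -x / (2 * β) = -(1 / 2) * (x / β) from fun x => by ring]
  linarith

theorem mul_one_add_rpow_add_rpow_mul_exp_le {ρ T u t β B q : ℝ} (hρ : 0 ≤ ρ) (hT : 0 < T)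
    (hu : 0 ≤ u) (ht : 0 ≤ t) (hβ : 0 < β) (hB : 0 ≤ B) (hq : 3 ≤ q)
    (h₁ : ρ ≤ B * T ^ ((3 : ℝ) / 2))
    (h₂ : ρ * (T + u ^ 2) ^ ((q - 3) / 2) ≤ B)
    (h₃ : ρ * u ^ (q + 3) ≤ B * ((T + u ^ 2) * T) ^ ((3 : ℝ) / 2)) :
    ρ * ((1 + u ^ q + t ^ q) * exp (-t ^ 2 / (2 * (β * T)))) ≤
      (1 + 2 ^ ((3 : ℝ) / 2) + exp (q ^ 2 / 2) * β ^ (q / 2)) * B * T ^ ((3 : ℝ) / 2) := by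
  set E := exp (-t ^ 2 / (2 * (β * T)))
  have hE : E ≤ 1 := Real.exp_le_one_iff.2 (by rw [neg_div]; exact neg_nonpos.2 (by positivity))
  have hconst : ρ * E ≤ B * T ^ ((3 : ℝ) / 2) := (mul_le_of_le_one_right hρ hE).trans h₁
  have hdrift : ρ * u ^ q * E ≤ 2 ^ ((3 : ℝ) / 2) * B * T ^ ((3 : ℝ) / 2) :=
    (mul_le_of_le_one_right (by positivity) hE).trans
      (mul_rpow_le_two_rpow_mul_of_moments hρ hT hu hB hq h₂ h₃)
  have hTq : T ^ (q / 2) = T ^ ((q - 3) / 2) * T ^ ((3 : ℝ) / 2) := by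
    rw [← Real.rpow_add hT]; ring_nf
  have htail : ρ * (t ^ q * E) ≤ exp (q ^ 2 / 2) * β ^ (q / 2) * B * T ^ ((3 : ℝ) / 2) :=
    calc ρ * (t ^ q * E) ≤ ρ * (exp (q ^ 2 / 2) * (β * T) ^ (q / 2)) :=
          mul_le_mul_of_nonneg_left (rpow_mul_exp_neg_sq_div_le (by linarith) (by positivity) ht) hρ
      _ = exp (q ^ 2 / 2) * β ^ (q / 2) * (ρ * T ^ ((q - 3) / 2)) * T ^ ((3 : ℝ) / 2) := by
          rw [Real.mul_rpow hβ.le hT.le, hTq]; ring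
      _ ≤ exp (q ^ 2 / 2) * β ^ (q / 2) * B * T ^ ((3 : ℝ) / 2) := by
          gcongr; exact mul_rpow_le_of_moment hρ hT hq h₂
  calc ρ * ((1 + u ^ q + t ^ q) * E) = ρ * E + ρ * u ^ q * E + ρ * (t ^ q * E) := by ring
    _ ≤ B * T ^ ((3 : ℝ) / 2) + 2 ^ ((3 : ℝ) / 2) * B * T ^ ((3 : ℝ) / 2) +
          exp (q ^ 2 / 2) * β ^ (q / 2) * B * T ^ ((3 : ℝ) / 2) :=
        add_le_add (add_le_add hconst hdrift) htail
    _ = (1 + 2 ^ ((3 : ℝ) / 2) + exp (q ^ 2 / 2) * β ^ (q / 2)) * B * T ^ ((3 : ℝ) / 2) := by ring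

/-- weighted `L∞_q` control of the ellipsoidal Gaussian by the moment bounds. -/
theorem gaussian_weighted_bound (q nt : ℝ) (hq : 5 < q) (hnt : nt ∈ Set.Ioo (-(1 / 2) : ℝ) 1) :
    ∃ C > 0, ∀ (ρ T : ℝ) (U : V3) (𝒯 : Matrix (Fin 3) (Fin 3) ℝ),
      0 < ρ → 0 < T → 𝒯.IsSymm →
      (∀ k : V3, min (1 - nt) (1 + 2 * nt) * T * enorm3 k ^ 2 ≤ quadForm 𝒯 k ∧
          quadForm 𝒯 k ≤ max (1 - nt) (1 + 2 * nt) * T * enorm3 k ^ 2) →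
      ∀ B : ℝ, 0 < B →
        ρ ≤ B * T ^ ((3 : ℝ) / 2) →
        ρ * (T + enorm3 U ^ 2) ^ ((q - 3) / 2) ≤ B →
        ρ * enorm3 U ^ (q + 3) ≤ B * ((T + enorm3 U ^ 2) * T) ^ ((3 : ℝ) / 2) →
        ∀ v : V3, (1 + enorm3 v) ^ q * gaussianM ρ U 𝒯 v ≤ C * B := by
  obtain ⟨hnt₁, hnt₂⟩ := hnt
  set m := min (1 - nt) (1 + 2 * nt)
  set M := max (1 - nt) (1 + 2 * nt)
  have hm : 0 < m := lt_min (by linarith) (by linarith)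
  have hM : 0 < M := hm.trans_le min_le_max
  set K := 1 + 2 ^ ((3 : ℝ) / 2) + exp (q ^ 2 / 2) * M ^ (q / 2)
  refine ⟨3 ^ (q - 1) * K / (2 * π * m) ^ ((3 : ℝ) / 2), by positivity, ?_⟩
  intro ρ T U 𝒯 hρ hT h𝒯 hb B hB h₁ h₂ h₃ v
  set u := enorm3 U
  set t := enorm3 (fun a => v a - U a)
  have hu : 0 ≤ u := enorm3_nonneg U
  have ht : 0 ≤ t := enorm3_nonneg _
  have hgauss := gaussianM_le hρ.le h𝒯 (mul_pos hm hT) (mul_pos hM hT) hb U v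
  have hweight : (1 + enorm3 v) ^ q ≤ 3 ^ (q - 1) * (1 + u ^ q + t ^ q) := by
    calc (1 + enorm3 v) ^ q ≤ (1 + u + t) ^ q :=
          Real.rpow_le_rpow (by linarith [enorm3_nonneg v])
            (by linarith [enorm3_le_add_enorm3_sub v U]) (by linarith)
      _ ≤ 3 ^ (q - 1) * (1 + u ^ q + t ^ q) := by
          simpa using rpow_add_add_le_mul_rpow_add_rpow_add_rpow zero_le_one hu ht (by linarith)
  have hmoment :=
    mul_one_add_rpow_add_rpow_mul_exp_le hρ.le hT hu ht hM hB.le (by linarith) h₁ h₂ h₃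
  calc (1 + enorm3 v) ^ q * gaussianM ρ U 𝒯 v
      ≤ 3 ^ (q - 1) * (1 + u ^ q + t ^ q) *
          (ρ / (2 * π * (m * T)) ^ ((3 : ℝ) / 2) * exp (-t ^ 2 / (2 * (M * T)))) :=
        mul_le_mul hweight hgauss (by unfold gaussianM; positivity) (by positivity)
    _ = 3 ^ (q - 1) / ((2 * π * m) ^ ((3 : ℝ) / 2) * T ^ ((3 : ℝ) / 2)) *
          (ρ * ((1 + u ^ q + t ^ q) * exp (-t ^ 2 / (2 * (M * T))))) := by
        rw [← mul_assoc (2 * π) m T, Real.mul_rpow (by positivity) hT.le]; ring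
    _ ≤ 3 ^ (q - 1) / ((2 * π * m) ^ ((3 : ℝ) / 2) * T ^ ((3 : ℝ) / 2)) *
          (K * B * T ^ ((3 : ℝ) / 2)) := by gcongr
    _ = 3 ^ (q - 1) * K / (2 * π * m) ^ ((3 : ℝ) / 2) * B := by
        field_simp

end
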